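/- Let A be an associative unital ring and let x, y ∈ A satisfy x·x = x, x·y + y·x = y, and y^N = 0 for some N ≥ 1. Let C_n (n ≥ 1) denote the shifted Catalan numbers, C_n = catalan(n−1), so C_1 = 1 and C_n = Σ_{i=1}^{n−1} C_i · C_{n−i} for n ≥ 2. Then the element p := x + y + Σ_{n=1}^{N} C_n · (1 − 2x) · y^{2n} of A (a finite sum, every term with 2n ≥ N being zero) is idempotent: p·p = p. -/

import Mathlib

open Finset

lemma cat_conv {k : ℕ} (hk : 2 ≤ k) :
    ∑ m ∈ Icc 1 (k-1), catalan (m-1) * catalan (k-m-1) = catalan (k-1) := by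
  obtain ⟨j, rfl⟩ : ∃ j, k = j + 2 := ⟨k - 2, by omega⟩
  have h1 : j + 2 - 1 = j + 1 := by omega
  rw [h1, catalan_succ']
  refine Finset.sum_nbij' (fun m => (m-1, j+1-m)) (fun p => p.1 + 1) ?_ ?_ ?_ ?_ ?_
  · intro m hm
    simp only [Finset.mem_Icc] at hm
    simp only [Finset.HasAntidiagonal.mem_antidiagonal]
    omega
  · intro p hp
    simp only [Finset.HasAntidiagonal.mem_antidiagonal] at hp
    simp only [Finset.mem_Icc]
    omega
  · intro m hm
    simp only [Finset.mem_Icc] at hm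
    dsimp only
    omega
  · intro p hp
    simp only [Finset.HasAntidiagonal.mem_antidiagonal] at hp
    obtain ⟨a, b⟩ := p
    simp only [Finset.HasAntidiagonal.mem_antidiagonal] at hp
    dsimp only
    simp only [Prod.mk.injEq]
    constructor <;> omega
  · intro m hm
    simp only [Finset.mem_Icc] at hm
    dsimp only
    congr 2
    omega

lemma aux {B : Type*} [Ring B] (w : B) (N : ℕ) (hN : 1 ≤ N) (hw : w ^ N = 0) :
    (∑ n ∈ Icc 1 N, catalan (n - 1) • w ^ n) *
      (∑ n ∈ Icc 1 N, catalan (n - 1) • w ^ n) + w =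
    ∑ n ∈ Icc 1 N, catalan (n - 1) • w ^ n := by
  have hw' : ∀ k, N ≤ k → w ^ k = 0 := by
    intro k hk
    rw [← Nat.sub_add_cancel hk, pow_add, hw, mul_zero]
  have hsplit : Icc 1 N = insert 1 (Icc 2 N) := by
    ext a; simp only [Finset.mem_insert, Finset.mem_Icc]; omega
  have h1 : (∑ n ∈ Icc 1 N, catalan (n - 1) • w ^ n)
      = w + ∑ n ∈ Icc 2 N, catalan (n - 1) • w ^ n := by
    rw [hsplit, Finset.sum_insert (by simp)]
    norm_num
  rw [Finset.sum_mul_sum]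
  have hterm : ∀ m n : ℕ, (catalan (m-1) • w ^ m) * (catalan (n-1) • w ^ n)
      = (catalan (m-1) * catalan (n-1)) • w ^ (m+n) := by
    intro m n; rw [smul_mul_assoc, mul_smul_comm, smul_smul, pow_add]
  simp_rw [hterm]
  rw [← Finset.sum_product']
  have step1 : ∑ p ∈ (Icc 1 N ×ˢ Icc 1 N).filter (fun p => p.1 + p.2 < N),
        (catalan (p.1-1) * catalan (p.2-1)) • w ^ (p.1+p.2)
      = ∑ p ∈ Icc 1 N ×ˢ Icc 1 N,
        (catalan (p.1-1) * catalan (p.2-1)) • w ^ (p.1+p.2) := by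
    apply Finset.sum_filter_of_ne
    intro p _ hne
    by_contra hlt
    have hz : w ^ (p.1 + p.2) = 0 := hw' _ (by omega)
    rw [hz, smul_zero] at hne
    exact hne rfl
  rw [← step1]
  have step2 : ∑ p ∈ (Icc 1 N ×ˢ Icc 1 N).filter (fun p => p.1 + p.2 < N),
        (catalan (p.1-1) * catalan (p.2-1)) • w ^ (p.1+p.2)
      = ∑ q ∈ (Icc 2 (N-1)).sigma (fun k => Icc 1 (k-1)),
          (catalan (q.2-1) * catalan (q.1-q.2-1)) • w ^ q.1 := by
    refine Finset.sum_nbij' (fun p => ⟨p.1+p.2, p.1⟩) (fun q => (q.2, q.1 - q.2)) ?_ ?_ ?_ ?_ ?_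
    · intro p hp
      simp only [Finset.mem_filter, Finset.mem_product, Finset.mem_Icc] at hp
      simp only [Finset.mem_sigma, Finset.mem_Icc]
      refine ⟨⟨by omega, by omega⟩, by omega, by omega⟩
    · intro q hq
      simp only [Finset.mem_sigma, Finset.mem_Icc] at hq
      simp only [Finset.mem_filter, Finset.mem_product, Finset.mem_Icc]
      refine ⟨⟨⟨by omega, by omega⟩, by omega, by omega⟩, by omega⟩
    · intro p hp
      obtain ⟨m, n⟩ := p
      simp only [Finset.mem_filter, Finset.mem_product, Finset.mem_Icc] at hp
      dsimp only
      have e : m + n - m = n := by omega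
      simp only [e]
    · intro q hq
      simp only [Finset.mem_sigma, Finset.mem_Icc] at hq
      obtain ⟨k, m⟩ := q
      dsimp only at hq ⊢
      have e : m + (k - m) = k := by omega
      simp only [e]
    · intro p hp
      simp only [Finset.mem_filter, Finset.mem_product, Finset.mem_Icc] at hp
      dsimp only
      have e : p.1 + p.2 - p.1 = p.2 := by omega
      rw [e]
  rw [step2, Finset.sum_sigma]
  have step3 : ∀ k ∈ Icc 2 (N-1),
      ∑ m ∈ Icc 1 (k-1), (catalan (m-1) * catalan (k-m-1)) • w ^ k
        = catalan (k-1) • w ^ k := by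
    intro k hk
    simp only [Finset.mem_Icc] at hk
    rw [← Finset.sum_smul, cat_conv hk.1]
  rw [Finset.sum_congr rfl step3]
  have step4 : ∑ k ∈ Icc 2 (N-1), catalan (k-1) • w ^ k
      = ∑ k ∈ Icc 2 N, catalan (k-1) • w ^ k := by
    apply Finset.sum_subset
    · apply Finset.Icc_subset_Icc_right; omega
    · intro k hk hk'
      simp only [Finset.mem_Icc] at hk hk'
      rw [hw' k (by omega), smul_zero]
  rw [step4, h1, add_comm]

lemma outer {A : Type*} [Ring A] (x y z Q : A) (hx : x * x = x) (hxy : x * y + y * x = y)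
    (hxz : x * z = -x) (hzx : z * x = -x) (hyz : y * z = -(z * y)) (hzz : z * z = 1)
    (hxQ : Q * x = x * Q) (hyQ : Q * y = y * Q) (hzQ : Q * z = z * Q)
    (hQQ : Q * Q + y * y = Q) (hz1 : z * Q = Q - 2 * (x * Q)) :
    (x + y + z * Q) * (x + y + z * Q) = x + y + z * Q := by
  calc (x + y + z * Q) * (x + y + z * Q)
      = x * x + (x * y + y * x) + y * y + (x * z) * Q + z * (Q * x)
        + (y * z) * Q + z * (Q * y) + z * (Q * z) * Q := by noncomm_ring
    _ = x + y + y * y + (-x) * Q + z * (x * Q) + (-(z * y)) * Q + z * (y * Q)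
        + z * (z * Q) * Q := by rw [hx, hxy, hxz, hxQ, hyz, hyQ, hzQ]
    _ = x + y + y * y + (-x) * Q + (z * x) * Q + (-(z * y)) * Q + (z * y) * Q
        + (z * z) * (Q * Q) := by noncomm_ring
    _ = x + y + y * y + (-x) * Q + (-x) * Q + (-(z * y)) * Q + (z * y) * Q
        + 1 * (Q * Q) := by rw [hzx, hzz]
    _ = x + y + (Q * Q + y * y) - 2 * (x * Q) := by noncomm_ring
    _ = x + y + (Q - 2 * (x * Q)) := by rw [hQQ]; noncomm_ring
    _ = x + y + z * Q := by rw [hz1]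

/-- Let `A` be an associative unital ring and `x y : A` with
`x*x = x`, `x*y + y*x = y` and `y^N = 0` for some `N ≥ 1`.  With `C n = catalan (n-1)`
the shifted Catalan numbers, the element
`p = x + y + ∑_{n=1}^{N} C n • ((1 - 2x) * y^(2n))` is idempotent. -/
theorem catalan_idempotent (A : Type*) [Ring A] (x y : A) (N : ℕ) (hN : 1 ≤ N)
    (hx : x * x = x) (hxy : x * y + y * x = y) (hy : y ^ N = 0) :
    (x + y + ∑ n ∈ Finset.Icc 1 N, catalan (n - 1) • ((1 - 2 * x) * y ^ (2 * n))) *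
        (x + y + ∑ n ∈ Finset.Icc 1 N, catalan (n - 1) • ((1 - 2 * x) * y ^ (2 * n))) =
      x + y + ∑ n ∈ Finset.Icc 1 N, catalan (n - 1) • ((1 - 2 * x) * y ^ (2 * n)) := by
  have hS : ∑ n ∈ Finset.Icc 1 N, catalan (n - 1) • ((1 - 2 * x) * y ^ (2 * n))
      = (1 - 2 * x) * ∑ n ∈ Icc 1 N, catalan (n - 1) • (y * y) ^ n := by
    rw [Finset.mul_sum]
    refine Finset.sum_congr rfl fun n _ => ?_
    rw [mul_smul_comm, pow_mul, pow_two]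
  rw [hS]
  set Q : A := ∑ n ∈ Icc 1 N, catalan (n - 1) • (y * y) ^ n with hQdef
  have hxz : x * (1 - 2 * x) = -x := by
    have h : x * (1 - 2 * x) = x - 2 * (x * x) := by noncomm_ring
    rw [h, hx]; noncomm_ring
  have hzx : (1 - 2 * x) * x = -x := by
    have h : (1 - 2 * x) * x = x - 2 * (x * x) := by noncomm_ring
    rw [h, hx]; noncomm_ring
  have hzz : (1 - 2 * x) * (1 - 2 * x) = 1 := by
    have h : (1 - 2 * x) * (1 - 2 * x) = 1 - 4 * x + 4 * (x * x) := by noncomm_ring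
    rw [h, hx]; noncomm_ring
  have hyz : y * (1 - 2 * x) = -((1 - 2 * x) * y) := by
    apply eq_neg_of_add_eq_zero_left
    have h : y * (1 - 2 * x) + (1 - 2 * x) * y = 2 * y - 2 * (x * y + y * x) := by noncomm_ring
    rw [h, hxy]; noncomm_ring
  have hzy : (1 - 2 * x) * y = -(y * (1 - 2 * x)) := by rw [hyz, neg_neg]
  have h1 : x * y = y - y * x := eq_sub_of_add_eq hxy
  have hxyy : Commute x (y * y) := by
    show x * (y * y) = (y * y) * x
    calc x * (y * y) = (x * y) * y := by rw [mul_assoc]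
      _ = (y - y * x) * y := by rw [h1]
      _ = y * y - y * (x * y) := by noncomm_ring
      _ = y * y - y * (y - y * x) := by rw [h1]
      _ = (y * y) * x := by noncomm_ring
  have hzyy : Commute (1 - 2 * x) (y * y) := by
    show (1 - 2 * x) * (y * y) = (y * y) * (1 - 2 * x)
    calc (1 - 2 * x) * (y * y) = ((1 - 2 * x) * y) * y := by rw [mul_assoc]
      _ = (-(y * (1 - 2 * x))) * y := by rw [hzy]
      _ = -(y * ((1 - 2 * x) * y)) := by noncomm_ring
      _ = -(y * (-(y * (1 - 2 * x)))) := by rw [hzy]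
      _ = (y * y) * (1 - 2 * x) := by noncomm_ring
  have hyyy : Commute y (y * y) := (Commute.refl y).mul_right (Commute.refl y)
  have hcomm : ∀ c : A, Commute c (y * y) → Commute c Q := by
    intro c hc
    apply Commute.sum_right
    intro n _
    exact (hc.pow_right n).smul_right _
  have hxQ : Q * x = x * Q := (hcomm x hxyy).symm.eq
  have hyQ : Q * y = y * Q := (hcomm y hyyy).symm.eq
  have hzQ : Q * (1 - 2 * x) = (1 - 2 * x) * Q := (hcomm _ hzyy).symm.eq
  have hwN : (y * y) ^ N = 0 := by
    rw [← pow_two, ← pow_mul, mul_comm, pow_mul, hy]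
    exact zero_pow (by norm_num)
  have hQQ : Q * Q + y * y = Q := aux (y * y) N hN hwN
  have hz1 : (1 - 2 * x) * Q = Q - 2 * (x * Q) := by noncomm_ring
  exact outer x y (1 - 2 * x) Q hx hxy hxz hzx hyz hzz hxQ hyQ hzQ hQQ hz1
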